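/- arXiv:1909.07492 — 5 statements merged into one kernel-verified Lean document; each statement's English description precedes it below -/
import Mathlib

section
/- Let g : ℝⁿ → ℝⁿ be locally Lipschitz, f a C¹ Lyapunov function (∇fᵀg ≤ 0 everywhere), K a compact set invariant under the flow φ of ẋ = g(x) (with φ defined on ℝ₊ × K). Suppose there exist ε > 0 with f* := min_K f, such that λ := −max_{x∈K, f(x) ≥ f*+ε} ∇f(x)ᵀg(x) > 0. Then for T = (max_K f − f*)/λ and all t ≥ T and all x ∈ K, f(φᵗ(x)) − f* ≤ ε. -/
/-!
Along a trajectory starting in `K`, `F s = f (φ s x)` is nonincreasing, because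
`F' = ∇f ⬝ g ≤ 0`. So if `F t ≥ f* + ε`, then `F ≥ f* + ε` on all of `[0, t]`, where
`F' ≤ -λ`; hence `F t ≤ F 0 - λ t ≤ max_K f - λ t`, which for `t ≥ T` is at most `f*`,
a contradiction.
-/

open Set

theorem le_sub_mul_of_deriv_le_neg_on_superlevel {F F' : ℝ → ℝ} {c lam t : ℝ}
    (hF : ∀ s ≥ 0, HasDerivAt F (F' s) s) (hF'_nonpos : ∀ s ≥ 0, F' s ≤ 0)
    (hF'_le : ∀ s ≥ 0, c ≤ F s → F' s ≤ -lam) (ht : 0 ≤ t) (hc : c ≤ F t) :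
    F t ≤ F 0 - lam * t := by
  have hanti : AntitoneOn F (Ici 0) := by
    refine antitoneOn_of_hasDerivWithinAt_nonpos (f' := F') (convex_Ici 0)
      (fun s hs => (hF s hs).continuousAt.continuousWithinAt) (fun s hs => ?_) (fun s hs => ?_)
    all_goals rw [interior_Ici] at hs
    · exact (hF s hs.le).hasDerivWithinAt
    · exact hF'_nonpos s hs.le
  have hbound : ∀ s ∈ Ico 0 t, F' s ≤ -lam := fun s hs =>
    hF'_le s hs.1 (hc.trans (hanti hs.1 ht hs.2.le))
  have hline : ∀ s, HasDerivWithinAt (fun s => F 0 - lam * s) (-lam) (Ici s) s := fun s =>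
    (((hasDerivAt_id s).const_mul lam).const_sub (F 0)).hasDerivWithinAt.congr_deriv (by ring)
  exact image_le_of_deriv_right_le_deriv_boundary
    (fun s hs => (hF s hs.1).continuousAt.continuousWithinAt)
    (fun s hs => (hF s hs.1).hasDerivWithinAt) (by simp) (by fun_prop)
    (fun s _ => hline s) hbound ⟨ht, le_rfl⟩

theorem stmt5_general (n : ℕ)
    (g : EuclideanSpace ℝ (Fin n) → EuclideanSpace ℝ (Fin n))
    (f : EuclideanSpace ℝ (Fin n) → ℝ) (hf : ContDiff ℝ 1 f)
    (hLyap : ∀ y, fderiv ℝ f y (g y) ≤ 0)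
    (K : Set (EuclideanSpace ℝ (Fin n))) (hK : IsCompact K)
    (φ : ℝ → EuclideanSpace ℝ (Fin n) → EuclideanSpace ℝ (Fin n))
    (hφ0 : ∀ x ∈ K, φ 0 x = x)
    (hinv : ∀ t ≥ (0:ℝ), ∀ x ∈ K, φ t x ∈ K)
    (hflow : ∀ x ∈ K, ∀ t ≥ (0:ℝ), HasDerivAt (fun s => φ s x) (g (φ t x)) t)
    (ε lam : ℝ) (hε : 0 < ε) (hlam : 0 < lam)
    (hrate : ∀ x ∈ K, sInf (f '' K) + ε ≤ f x → fderiv ℝ f x (g x) ≤ -lam) :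
    ∀ t ≥ (sSup (f '' K) - sInf (f '' K)) / lam, ∀ x ∈ K,
      f (φ t x) - sInf (f '' K) ≤ ε := by
  intro t ht x hx
  set m := sInf (f '' K)
  set M := sSup (f '' K)
  have hfK : m ≤ f x ∧ f x ≤ M :=
    ⟨csInf_le (hK.image hf.continuous).bddBelow (mem_image_of_mem f hx),
      le_csSup (hK.image hf.continuous).bddAbove (mem_image_of_mem f hx)⟩
  have hT : M - m ≤ lam * t := by rwa [ge_iff_le, div_le_iff₀ hlam, mul_comm] at ht
  have ht0 : 0 ≤ t := nonneg_of_mul_nonneg_right (by linarith) hlam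
  have hderiv : ∀ s ≥ 0,
      HasDerivAt (fun s => f (φ s x)) (fderiv ℝ f (φ s x) (g (φ s x))) s := fun s hs =>
    (hf.differentiable one_ne_zero _).hasFDerivAt.comp_hasDerivAt s (hflow x hx s hs)
  by_contra! hgt
  have hdesc := le_sub_mul_of_deriv_le_neg_on_superlevel (c := m + ε) hderiv
    (fun s _ => hLyap _) (fun s hs => hrate _ (hinv s hs x hx)) ht0 (by linarith)
  rw [hφ0 x hx] at hdesc
  linarith

/-- uniform convergence in value to the minimum on a compact
invariant set for a flow of `ẋ = g(x)` with Lyapunov function `f`.  With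
`f* = min_K f`, if `∇fᵀg ≤ −λ < 0` on `{x ∈ K : f x ≥ f* + ε}`, then for
`T = (max_K f − f*)/λ` and all `t ≥ T`, `x ∈ K`, `f(φᵗ(x)) − f* ≤ ε`. -/
theorem stmt5 (n : ℕ)
    (g : EuclideanSpace ℝ (Fin n) → EuclideanSpace ℝ (Fin n))
    (f : EuclideanSpace ℝ (Fin n) → ℝ) (hf : ContDiff ℝ 1 f)
    (hLyap : ∀ y, fderiv ℝ f y (g y) ≤ 0)
    (K : Set (EuclideanSpace ℝ (Fin n))) (hK : IsCompact K) (hKne : K.Nonempty)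
    (φ : ℝ → EuclideanSpace ℝ (Fin n) → EuclideanSpace ℝ (Fin n))
    (hφ0 : ∀ x ∈ K, φ 0 x = x)
    (hinv : ∀ t ≥ (0:ℝ), ∀ x ∈ K, φ t x ∈ K)
    (hflow : ∀ x ∈ K, ∀ t ≥ (0:ℝ), HasDerivAt (fun s => φ s x) (g (φ t x)) t)
    (ε lam : ℝ) (hε : 0 < ε) (hlam : 0 < lam)
    (hrate : ∀ x ∈ K, sInf (f '' K) + ε ≤ f x → fderiv ℝ f x (g x) ≤ -lam) :
    ∀ t ≥ (sSup (f '' K) - sInf (f '' K)) / lam, ∀ x ∈ K,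
      f (φ t x) - sInf (f '' K) ≤ ε :=
  stmt5_general n g f hf hLyap K hK φ hφ0 hinv hflow ε lam hε hlam hrate
end

section
/- Let A, B be metric spaces, V an open subset of A × B, and φ : A ⇉ B a lower hemicontinuous correspondence. Then the correspondence ψ : a ↦ {b ∈ B : (a,b) ∈ V and b ∈ φ(a)} is lower hemicontinuous. -/
/-- A correspondence `φ : A ⇉ B` is lower hemicontinuous if whenever `φ a₀` meets
an open set `V`, so does `φ a` for all `a` in a neighbourhood of `a₀`. -/
def LowerHemicontinuousCorr {A B : Type*} [TopologicalSpace A] [TopologicalSpace B]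
    (φ : A → Set B) : Prop :=
  ∀ a₀ : A, ∀ V : Set B, IsOpen V → (φ a₀ ∩ V).Nonempty →
    ∃ I : Set A, IsOpen I ∧ a₀ ∈ I ∧ ∀ a ∈ I, (φ a ∩ V).Nonempty

open Filter Topology

section

variable {A B : Type*} [TopologicalSpace A] [TopologicalSpace B]

theorem lowerHemicontinuousCorr_iff_eventually {φ : A → Set B} :
    LowerHemicontinuousCorr φ ↔ ∀ a₀ : A, ∀ W : Set B, IsOpen W → (φ a₀ ∩ W).Nonempty →
      ∀ᶠ a in 𝓝 a₀, (φ a ∩ W).Nonempty := by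
  simp only [LowerHemicontinuousCorr, eventually_nhds_iff]
  grind

theorem LowerHemicontinuousCorr.inter_slices {φ : A → Set B} (hφ : LowerHemicontinuousCorr φ)
    {V : Set (A × B)} (hV : IsOpen V) :
    LowerHemicontinuousCorr (fun a => {b | (a, b) ∈ V ∧ b ∈ φ a}) := by
  rw [lowerHemicontinuousCorr_iff_eventually] at hφ ⊢
  rintro a₀ W hW ⟨b, ⟨hbV, hbφ⟩, hbW⟩
  -- A box `U ×ˢ U'` around `(a₀, b)` inside `V`: over `U`, points of `φ a` in `U'` lie in the slice.
  obtain ⟨U, U', hU, hU', haU, hbU', hUV⟩ := isOpen_prod_iff.1 hV a₀ b hbV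
  filter_upwards [hφ a₀ (W ∩ U') (hW.inter hU') ⟨b, hbφ, hbW, hbU'⟩, hU.mem_nhds haU]
    with a ⟨b', hb'φ, hb'W, hb'U'⟩ haU
  exact ⟨b', ⟨hUV ⟨haU, hb'U'⟩, hb'φ⟩, hb'W⟩

end

/-- if `V ⊆ A × B` is open and `φ` is lower hemicontinuous, then
`a ↦ sV(a) ∩ φ(a) = {b | (a,b) ∈ V ∧ b ∈ φ a}` is lower hemicontinuous. -/
theorem stmt7 {A B : Type*} [MetricSpace A] [MetricSpace B]
    (V : Set (A × B)) (hV : IsOpen V) (φ : A → Set B) (hφ : LowerHemicontinuousCorr φ) :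
    LowerHemicontinuousCorr (fun a => {b | (a, b) ∈ V ∧ b ∈ φ a}) :=
  hφ.inter_slices hV
end

section
/- Let h : U × ℝⁿ → ℝᵐ be continuously differentiable, U ⊆ ℝᵖ open, such that at every zero (u,x) of h the partial differential of h with respect to x is surjective. Then the correspondence M : u ↦ {x ∈ ℝⁿ : h(u,x) = 0} is lower hemicontinuous on U. -/
/-!
Let `g (u, x) = h u x` and `F (u, x) = (u, g (u, x))`. Surjectivity of the partial differential
`∂ₓ g` makes the differential `(du, dx) ↦ (du, Dg (du, dx))` of `F` surjective, so by the
surjective form of the inverse function theorem `F` maps every neighbourhood of a zero `(u₀, x₀)`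
onto a neighbourhood of `(u₀, 0)`. Hence for every `u` near `u₀` the point `(u, 0)` is the image
of some `(u, x)` with `x ∈ V`, i.e. `h u x = 0` with `x ∈ V`.
-/

open Filter Topology ContinuousLinearMap

section

variable {𝕜 : Type*} [NontriviallyNormedField 𝕜]
  {E X Y : Type*} [NormedAddCommGroup E] [NormedSpace 𝕜 E] [NormedAddCommGroup X]
  [NormedSpace 𝕜 X] [NormedAddCommGroup Y] [NormedSpace 𝕜 Y]

theorem ContinuousLinearMap.surjective_fst_prod_of_surjective_comp_inr
    {L : E × X →L[𝕜] Y} (hL : Function.Surjective (L ∘L inr 𝕜 E X)) :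
    Function.Surjective ((fst 𝕜 E X).prod L) := by
  rintro ⟨a, b⟩
  obtain ⟨dx, hdx⟩ := hL (b - L (a, 0))
  refine ⟨(a, dx), Prod.ext rfl ?_⟩
  have hsplit : ((a, dx) : E × X) = (a, 0) + inr 𝕜 E X dx := by simp
  change L (a, dx) = b
  rw [hsplit, map_add, ← comp_apply, hdx, add_sub_cancel]

theorem HasFDerivAt.comp_prodMk_right {g : E × X → Y} {L : E × X →L[𝕜] Y} {u : E} {x : X}
    (hg : HasFDerivAt g L (u, x)) :
    HasFDerivAt (fun y => g (u, y)) (L ∘L inr 𝕜 E X) x :=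
  hg.comp x (hasFDerivAt_prodMk_right u x)

variable [CompleteSpace E] [CompleteSpace X] [CompleteSpace Y]

theorem HasStrictFDerivAt.eventually_exists_mem_and_eq {g : E × X → Y} {L : E × X →L[𝕜] Y}
    {u₀ : E} {x₀ : X} (hg : HasStrictFDerivAt g L (u₀, x₀))
    (hL : Function.Surjective (L ∘L inr 𝕜 E X)) {s : Set (E × X)} (hs : s ∈ 𝓝 (u₀, x₀)) :
    ∀ᶠ u in 𝓝 u₀, ∃ x, (u, x) ∈ s ∧ g (u, x) = g (u₀, x₀) := by
  let F : E × X → E × Y := fun q => (q.1, g q)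
  have hF : map F (𝓝 (u₀, x₀)) = 𝓝 (u₀, g (u₀, x₀)) :=
    (hasStrictFDerivAt_fst.prodMk hg).map_nhds_eq_of_surj
      (LinearMap.range_eq_top.mpr (surjective_fst_prod_of_surjective_comp_inr hL))
  have himage : F '' s ∈ 𝓝 (u₀, g (u₀, x₀)) := hF ▸ image_mem_map hs
  have hslice : Tendsto (fun u => (u, g (u₀, x₀))) (𝓝 u₀) (𝓝 (u₀, g (u₀, x₀))) :=
    (continuous_id.prodMk continuous_const).tendsto u₀
  filter_upwards [hslice himage] with u ⟨⟨u', x⟩, hs, hFx⟩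
  obtain ⟨rfl, hgx⟩ := Prod.ext_iff.mp hFx
  exact ⟨x, hs, hgx⟩

end

/-- if `h : U × ℝⁿ → ℝᵐ` is C¹ and at every zero the partial
differential in `x` is surjective, then `u ↦ {x | h u x = 0}` is lower
hemicontinuous on `U`. -/
theorem stmt9 (p n m : ℕ) (U : Set (EuclideanSpace ℝ (Fin p))) (hU : IsOpen U)
    (h : EuclideanSpace ℝ (Fin p) → EuclideanSpace ℝ (Fin n) → EuclideanSpace ℝ (Fin m))
    (hsm : ContDiffOn ℝ 1
      (fun q : EuclideanSpace ℝ (Fin p) × EuclideanSpace ℝ (Fin n) => h q.1 q.2)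
      (U ×ˢ Set.univ))
    (hreg : ∀ u ∈ U, ∀ x : EuclideanSpace ℝ (Fin n), h u x = 0 →
      Function.Surjective (fderiv ℝ (h u) x))
    (u₀ : EuclideanSpace ℝ (Fin p)) (hu₀ : u₀ ∈ U)
    (V : Set (EuclideanSpace ℝ (Fin n))) (hV : IsOpen V)
    (hne : ({x | h u₀ x = 0} ∩ V).Nonempty) :
    ∃ W : Set (EuclideanSpace ℝ (Fin p)), IsOpen W ∧ u₀ ∈ W ∧ W ⊆ U ∧
      ∀ u ∈ W, ({x | h u x = 0} ∩ V).Nonempty := by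
  obtain ⟨x₀, hx₀ : h u₀ x₀ = 0, hx₀V⟩ := hne
  have hstrict := (hsm.contDiffAt ((hU.prod isOpen_univ).mem_nhds
    (show (u₀, x₀) ∈ U ×ˢ Set.univ from ⟨hu₀, trivial⟩))).hasStrictFDerivAt one_ne_zero
  have hsurj := hstrict.hasFDerivAt.comp_prodMk_right.fderiv ▸ hreg u₀ hu₀ x₀ hx₀
  have hnear := hstrict.eventually_exists_mem_and_eq hsurj
    (prod_mem_nhds (hU.mem_nhds hu₀) (hV.mem_nhds hx₀V))
  refine ⟨interior {u | ∃ x, (u, x) ∈ U ×ˢ V ∧ h u x = h u₀ x₀}, isOpen_interior,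
    mem_interior_iff_mem_nhds.mpr hnear, fun u hu => ?_, fun u hu => ?_⟩ <;>
    obtain ⟨x, ⟨huU, hxV⟩, hux⟩ := interior_subset hu
  · exact huU
  · exact ⟨x, hux.trans hx₀, hxV⟩
end

section
/- Let f : U → ℝ be C¹ on U ⊆ ℝⁿ open, and consider the flow of ẋ = −P(x)∇f(x) where P(x) is the orthogonal projection onto ker J(x) for a C¹ full-row-rank matrix field J. If x* is a strict constrained local minimum of f on {h = 0} (with J the Jacobian of h and h conserved by the flow), isolated in the set of constrained critical points, then x* is asymptotically stable: there is a neighbourhood V' of x* such that every solution starting in V' ∩ {h = 0} converges to x* as t → ∞. -/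
open Filter Set Metric Topology
open scoped InnerProductSpace

/-!
Along the flow `h` is conserved, because `P` projects onto `ker Dh`, and `f` is a Lyapunov
function: `d/dt f(γ t) = -‖P ∇f(γ t)‖²`. Choose a closed ball `B` around `x*` on which `x*` is
both the unique constrained minimum and the unique constrained critical point, and let `c > f x*`
bound `f` from below on `∂B ∩ {h = 0}`. A trajectory starting in `B ∩ {h = 0} ∩ {f < c}` can
never reach `∂B`, so it stays in the compact set `B ∩ {h = 0}`. At an ω-limit point `y` with
`P ∇f(y) ≠ 0`, every passage near `y` would lower `f` by a fixed amount in a fixed time, which is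
impossible since `f(γ t)` converges. So every ω-limit point is a constrained critical point,
i.e. `x*`, and compactness forces convergence to `x*`.
-/

section Projection

open ContinuousLinearMap

variable {𝕜 E F : Type*} [RCLike 𝕜] [NormedAddCommGroup E] [InnerProductSpace 𝕜 E]
  [NormedAddCommGroup F] [InnerProductSpace 𝕜 F]

theorem Submodule.eq_starProjection_of_eq_self_of_eq_zero (K : Submodule 𝕜 E)
    [K.HasOrthogonalProjection] {P : E →L[𝕜] E}
    (hK : ∀ v ∈ K, P v = v) (hKperp : ∀ v ∈ Kᗮ, P v = 0) : P = K.starProjection := by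
  ext v
  have hdecomp : v = K.starProjection v + (v - K.starProjection v) := by abel
  rw [hdecomp, map_add, hK _ (K.starProjection_apply_mem v),
    hKperp _ (K.sub_starProjection_mem_orthogonal v), add_zero, map_add,
    K.starProjection_eq_self_iff.mpr (K.starProjection_apply_mem v),
    K.starProjection_apply_eq_zero_iff.mpr (K.sub_starProjection_mem_orthogonal v), add_zero]

theorem Submodule.real_inner_self_starProjection {E : Type*} [NormedAddCommGroup E]
    [InnerProductSpace ℝ E] (K : Submodule ℝ E) [K.HasOrthogonalProjection] (v : E) :
    ⟪v, K.starProjection v⟫_ℝ = ‖K.starProjection v‖ ^ 2 := by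
  rw [← K.starProjection_eq_self_iff.mpr (K.starProjection_apply_mem v),
    ← K.inner_starProjection_left_eq_right, K.starProjection_eq_self_iff.mpr
    (K.starProjection_apply_mem v), real_inner_self_eq_norm_sq]

variable [CompleteSpace E] [CompleteSpace F]

theorem ContinuousLinearMap.starProjection_ker_eq {A : E →L[𝕜] F}
    (hA : IsUnit (A ∘L adjoint A)) :
    (LinearMap.ker (A : E →ₗ[𝕜] F)).starProjection =
      1 - adjoint A ∘L Ring.inverse (A ∘L adjoint A) ∘L A := by
  ext v
  have hw : A (adjoint A (Ring.inverse (A ∘L adjoint A) (A v))) = A v := by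
    simpa using congr($(Ring.mul_inverse_cancel _ hA) (A v))
  refine Submodule.eq_starProjection_of_mem_orthogonal ?_ ?_
  · simp [hw]
  · have hmem : adjoint A (Ring.inverse (A ∘L adjoint A) (A v)) ∈
        (LinearMap.ker (A : E →ₗ[𝕜] F))ᗮ :=
      (orthogonal_ker A).symm ▸ Submodule.le_topologicalClosure _ ⟨_, rfl⟩
    simpa using hmem

theorem ContinuousLinearMap.isUnit_comp_adjoint_of_surjective [FiniteDimensional 𝕜 F]
    {A : E →L[𝕜] F} (hA : Function.Surjective A) : IsUnit (A ∘L adjoint A) := by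
  rw [isUnit_iff_isUnit_toLinearMap, LinearMap.isUnit_iff_ker_eq_bot]
  exact (ker_self_comp_adjoint A).trans <| by
    rw [← orthogonal_range, LinearMap.range_eq_top.mpr hA, Submodule.top_orthogonal_eq_bot]

theorem ContinuousOn.starProjection_ker [FiniteDimensional 𝕜 F] {X : Type*}
    [TopologicalSpace X] {A : X → E →L[𝕜] F} {s : Set X} (hA : ContinuousOn A s)
    (hsurj : ∀ x ∈ s, Function.Surjective (A x)) :
    ContinuousOn (fun x => (LinearMap.ker (A x : E →ₗ[𝕜] F)).starProjection) s := by
  have hunit x (hx : x ∈ s) := isUnit_comp_adjoint_of_surjective (hsurj x hx)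
  have hadj : ContinuousOn (fun x => adjoint (A x)) s :=
    (adjoint : (E →L[𝕜] F) ≃ₗᵢ⋆[𝕜] (F →L[𝕜] E)).continuous.comp_continuousOn hA
  have hinv : ContinuousOn (fun x => Ring.inverse (A x ∘L adjoint (A x))) s := by
    intro x hx
    have hcont : ContinuousAt Ring.inverse (A x ∘L adjoint (A x)) := by
      rw [← (hunit x hx).unit_spec]
      exact NormedRing.inverse_continuousAt _
    exact hcont.comp_continuousWithinAt (f := fun x => A x ∘L adjoint (A x))
      (hA.clm_comp hadj x hx)
  exact (continuousOn_const.sub (hadj.clm_comp (hinv.clm_comp hA))).congr fun x hx =>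
    starProjection_ker_eq (hunit x hx)

end Projection

theorem Convex.image_sub_le_mul_sub_of_hasDerivAt_le {D : Set ℝ} (hD : Convex ℝ D)
    {g g' : ℝ → ℝ} {C : ℝ} (hg : ∀ t ∈ D, HasDerivAt g (g' t) t) (hC : ∀ t ∈ D, g' t ≤ C)
    {x y : ℝ} (hx : x ∈ D) (hy : y ∈ D) (hxy : x ≤ y) : g y - g x ≤ C * (y - x) :=
  hD.image_sub_le_mul_sub_of_deriv_le (fun t ht => (hg t ht).continuousAt.continuousWithinAt)
    (fun t ht => (hg t (interior_subset ht)).differentiableAt.differentiableWithinAt)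
    (fun t ht => (hg t (interior_subset ht)).deriv ▸ hC t (interior_subset ht)) x hx y hy hxy

theorem antitoneOn_Ici_of_hasDerivAt_nonpos {g g' : ℝ → ℝ} {a : ℝ}
    (hg : ∀ t ≥ a, HasDerivAt g (g' t) t) (hg' : ∀ t ≥ a, g' t ≤ 0) : AntitoneOn g (Ici a) :=
  fun s hs t ht hst => by
    have := (convex_Ici a).image_sub_le_mul_sub_of_hasDerivAt_le hg hg' hs ht hst
    linarith

theorem AntitoneOn.tendsto_sub_comp_add_const {g : ℝ → ℝ} {a : ℝ} (hg : AntitoneOn g (Ici a))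
    (hbdd : BddBelow (g '' Ici a)) (τ : ℝ) :
    Tendsto (fun t => g t - g (t + τ)) atTop (𝓝 0) := by
  set g' : ℝ → ℝ := fun t => g (max t a)
  have hanti : Antitone g' := fun s t hst =>
    hg (le_max_right s a) (le_max_right t a) (max_le_max_right a hst)
  have hbdd' : BddBelow (range g') :=
    hbdd.mono (range_subset_iff.mpr fun t => mem_image_of_mem g (le_max_right t a))
  have hlim := tendsto_atTop_ciInf hanti hbdd'
  have hshift := tendsto_atTop_add_const_right atTop τ tendsto_id
  have hlarge : ∀ᶠ t in atTop, a ≤ t ∧ a ≤ t + τ :=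
    (eventually_ge_atTop a).and (hshift.eventually (eventually_ge_atTop a))
  refine (sub_self (⨅ t, g' t) ▸ hlim.sub (hlim.comp hshift)).congr' ?_
  filter_upwards [hlarge] with t ht
  simp [g', max_eq_left ht.1, max_eq_left ht.2]

theorem IsCompact.exists_gt_forall_le_of_forall_lt {E : Type*} [TopologicalSpace E] {S : Set E}
    (hS : IsCompact S) {V : E → ℝ} (hV : ContinuousOn V S) {a : ℝ} (h : ∀ z ∈ S, a < V z) :
    ∃ c, a < c ∧ ∀ z ∈ S, c ≤ V z := by
  rcases S.eq_empty_or_nonempty with rfl | hne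
  · exact ⟨a + 1, by linarith, by simp⟩
  · obtain ⟨z₀, hz₀, hmin⟩ := hS.exists_isMinOn hne hV
    exact ⟨V z₀, h z₀ hz₀, hmin⟩

theorem mem_closedBall_of_antitoneOn {E : Type*} [PseudoMetricSpace E] {γ : ℝ → E} {V : E → ℝ}
    {S : Set E} {x : E} {r c : ℝ}
    (hγ : ContinuousOn γ (Ici 0)) (hV : AntitoneOn (fun t => V (γ t)) (Ici 0))
    (hγS : ∀ t ≥ 0, γ t ∈ S) (h0 : γ 0 ∈ ball x r) (hc : V (γ 0) < c)
    (hsphere : ∀ z ∈ sphere x r ∩ S, c ≤ V z) : ∀ t ≥ 0, γ t ∈ closedBall x r := by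
  intro t ht
  by_contra hout
  rw [mem_closedBall, not_le] at hout
  obtain ⟨s, hs, hsr⟩ := intermediate_value_Icc ht
    ((continuous_id.dist continuous_const).comp_continuousOn (hγ.mono Icc_subset_Ici_self))
    ⟨(mem_ball.mp h0).le, hout.le⟩
  have hcs := hsphere (γ s) ⟨mem_sphere.mpr hsr, hγS s hs.1⟩
  have hdec : V (γ s) ≤ V (γ 0) := hV (mem_Ici.mpr le_rfl) hs.1 hs.1
  linarith

section Lyapunov

variable {E : Type*} [NormedAddCommGroup E] [NormedSpace ℝ E]

theorem dist_le_mul_of_hasDerivAt_of_norm_le {γ γ' : ℝ → E} {t τ M : ℝ}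
    (hγ : ∀ s ∈ Icc t (t + τ), HasDerivAt γ (γ' s) s) (hM : ∀ s ∈ Icc t (t + τ), ‖γ' s‖ ≤ M)
    {s : ℝ} (hs : s ∈ Icc t (t + τ)) : dist (γ s) (γ t) ≤ M * τ := by
  rw [dist_eq_norm]
  refine (norm_image_sub_le_of_norm_deriv_le_segment' (fun w hw => (hγ w hw).hasDerivWithinAt)
    (fun w hw => hM w (Ico_subset_Icc_self hw)) s hs).trans ?_
  exact mul_le_mul_of_nonneg_left (by linarith [hs.2]) ((norm_nonneg _).trans (hM s hs))

theorem eq_zero_of_mapClusterPt_of_hasDerivAt {K : Set E} (hK : IsCompact K) {G : E → E}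
    (hG : ContinuousOn G K) {V : E → ℝ} (hV : ContinuousOn V K) {γ : ℝ → E}
    (hγK : ∀ t ≥ 0, γ t ∈ K) (hγ : ∀ t ≥ 0, HasDerivAt γ (-G (γ t)) t)
    (hVγ : ∀ t ≥ 0, HasDerivAt (fun s => V (γ s)) (-‖G (γ t)‖ ^ 2) t)
    {y : E} (hyK : y ∈ K) (hy : MapClusterPt y atTop γ) : G y = 0 := by
  by_contra hne
  set δ := ‖G y‖ / 2 with hδ_def
  have hδ : 0 < δ := by positivity
  obtain ⟨ρ, hρ, hGρ⟩ : ∃ ρ > 0, ∀ z ∈ K, dist z y < ρ → δ ≤ ‖G z‖ := by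
    obtain ⟨ρ, hρ, h⟩ := Metric.continuousWithinAt_iff.mp (hG y hyK).norm δ hδ
    refine ⟨ρ, hρ, fun z hz hzy => ?_⟩
    linarith [(abs_sub_lt_iff.mp (h hz hzy)).2]
  obtain ⟨M, hM⟩ := hK.exists_bound_of_continuousOn hG
  have hMpos : 0 < M := (norm_pos_iff.mpr hne).trans_le (hM y hyK)
  set τ := ρ / (2 * M)
  have hτ : 0 < τ := by positivity
  have hMτ : M * τ = ρ / 2 := by simp only [τ]; field_simp
  have hanti : AntitoneOn (fun t => V (γ t)) (Ici 0) :=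
    antitoneOn_Ici_of_hasDerivAt_nonpos hVγ fun _ _ => neg_nonpos.mpr (sq_nonneg _)
  have hbdd : BddBelow ((fun t => V (γ t)) '' Ici 0) :=
    (hK.bddBelow_image hV).mono <| by
      rintro _ ⟨t, ht, rfl⟩
      exact mem_image_of_mem V (hγK t ht)
  obtain ⟨t, hnear, ht, hsmall⟩ := ((hy.frequently (ball_mem_nhds y (half_pos hρ))).and_eventually
    ((eventually_ge_atTop 0).and ((hanti.tendsto_sub_comp_add_const hbdd τ).eventually
      (gt_mem_nhds (by positivity : 0 < δ ^ 2 * τ))))).exists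
  have hIcc : ∀ s ∈ Icc t (t + τ), 0 ≤ s := fun s hs => ht.trans hs.1
  have hfast : ∀ s ∈ Icc t (t + τ), δ ≤ ‖G (γ s)‖ := by
    intro s hs
    have hdisp := dist_le_mul_of_hasDerivAt_of_norm_le (fun w hw => hγ w (hIcc w hw))
      (fun w hw => (norm_neg (G (γ w))).trans_le (hM _ (hγK w (hIcc w hw)))) hs
    refine hGρ _ (hγK s (hIcc s hs)) ?_
    calc dist (γ s) y ≤ dist (γ s) (γ t) + dist (γ t) y := dist_triangle _ _ _
      _ < M * τ + ρ / 2 := add_lt_add_of_le_of_lt hdisp hnear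
      _ = ρ := by rw [hMτ]; ring
  have hdrop := (convex_Icc t (t + τ)).image_sub_le_mul_sub_of_hasDerivAt_le
    (fun s hs => hVγ s (hIcc s hs))
    (fun s hs => neg_le_neg (pow_le_pow_left₀ hδ.le (hfast s hs) 2))
    (left_mem_Icc.mpr (by linarith)) (right_mem_Icc.mpr (by linarith)) (by linarith)
  simp only [add_sub_cancel_left] at hdrop
  linarith

theorem tendsto_of_hasDerivAt_of_forall_eq_zero {K : Set E} (hK : IsCompact K) {G : E → E}
    (hG : ContinuousOn G K) {V : E → ℝ} (hV : ContinuousOn V K) {γ : ℝ → E}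
    (hγK : ∀ t ≥ 0, γ t ∈ K) (hγ : ∀ t ≥ 0, HasDerivAt γ (-G (γ t)) t)
    (hVγ : ∀ t ≥ 0, HasDerivAt (fun s => V (γ s)) (-‖G (γ t)‖ ^ 2) t)
    {x : E} (hx : ∀ y ∈ K, G y = 0 → y = x) : Tendsto γ atTop (𝓝 x) :=
  hK.tendsto_nhds_of_unique_mapClusterPt ((eventually_ge_atTop 0).mono hγK) fun y hy hcl =>
    hx y hy (eq_zero_of_mapClusterPt_of_hasDerivAt hK hG hV hγK hγ hVγ hy hcl)

theorem exists_isOpen_forall_tendsto_of_hasDerivAt [ProperSpace E] {Z : Set E} (hZ : IsClosed Z)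
    {x : E} {r : ℝ} (hr : 0 < r) {G : E → E} (hG : ContinuousOn G (closedBall x r))
    {V : E → ℝ} (hV : ContinuousOn V (closedBall x r)) (hmin : ∀ z ∈ sphere x r ∩ Z, V x < V z)
    (hcrit : ∀ y ∈ closedBall x r ∩ Z, G y = 0 → y = x) {φ : ℝ → E → E}
    (hφ0 : ∀ x₀ ∈ ball x r, φ 0 x₀ = x₀) (hφZ : ∀ x₀ ∈ ball x r ∩ Z, ∀ t ≥ 0, φ t x₀ ∈ Z)
    (hφ : ∀ x₀ ∈ ball x r, ∀ t ≥ 0, HasDerivAt (φ · x₀) (-G (φ t x₀)) t)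
    (hVφ : ∀ x₀ ∈ ball x r, ∀ t ≥ 0, HasDerivAt (fun s => V (φ s x₀)) (-‖G (φ t x₀)‖ ^ 2) t) :
    ∃ W : Set E, IsOpen W ∧ x ∈ W ∧ ∀ x₀ ∈ W, x₀ ∈ Z → Tendsto (φ · x₀) atTop (𝓝 x) := by
  obtain ⟨c, hc, hcS⟩ := ((isCompact_sphere x r).inter_right hZ).exists_gt_forall_le_of_forall_lt
    (hV.mono (inter_subset_left.trans sphere_subset_closedBall)) hmin
  refine ⟨ball x r ∩ V ⁻¹' Iio c, (hV.mono ball_subset_closedBall).isOpen_inter_preimage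
    isOpen_ball isOpen_Iio, ⟨mem_ball_self hr, hc⟩, ?_⟩
  rintro x₀ ⟨hx₀r, hx₀c⟩ hx₀Z
  have hstay : ∀ t ≥ 0, φ t x₀ ∈ closedBall x r :=
    mem_closedBall_of_antitoneOn (fun t ht => (hφ x₀ hx₀r t ht).continuousAt.continuousWithinAt)
      (antitoneOn_Ici_of_hasDerivAt_nonpos (hVφ x₀ hx₀r) fun _ _ => neg_nonpos.mpr (sq_nonneg _))
      (hφZ x₀ ⟨hx₀r, hx₀Z⟩) (by rwa [hφ0 x₀ hx₀r]) (by rwa [hφ0 x₀ hx₀r]) hcS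
  exact tendsto_of_hasDerivAt_of_forall_eq_zero ((isCompact_closedBall x r).inter_right hZ)
    (hG.mono inter_subset_left) (hV.mono inter_subset_left)
    (fun t ht => ⟨hstay t ht, hφZ x₀ ⟨hx₀r, hx₀Z⟩ t ht⟩) (hφ x₀ hx₀r) (hVφ x₀ hx₀r) hcrit

end Lyapunov

section ProjectedGradientFlow

variable {E F : Type*} [NormedAddCommGroup E] [InnerProductSpace ℝ E] [FiniteDimensional ℝ E]
  [NormedAddCommGroup F] [InnerProductSpace ℝ F]

noncomputable def projectedGradient (h : E → F) (f : E → ℝ) (x : E) : E :=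
  (LinearMap.ker (fderiv ℝ h x : E →ₗ[ℝ] F)).starProjection (gradient f x)

theorem continuousOn_projectedGradient [FiniteDimensional ℝ F] {U : Set E} (hU : IsOpen U)
    {f : E → ℝ} (hf : ContDiffOn ℝ 1 f U) {h : E → F} (hh : ContDiffOn ℝ 1 h U)
    (hsurj : ∀ x ∈ U, Function.Surjective (fderiv ℝ h x)) :
    ContinuousOn (projectedGradient h f) U := by
  have hgrad : ContinuousOn (gradient f) U :=
    (InnerProductSpace.toDual ℝ E).symm.continuous.comp_continuousOn
      (hf.continuousOn_fderiv_of_isOpen hU le_rfl)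
  exact ((hh.continuousOn_fderiv_of_isOpen hU le_rfl).starProjection_ker hsurj).clm_apply hgrad

variable {h : E → F} {f : E → ℝ} {γ : ℝ → E}

theorem projectedGradient_eq_zero_iff {x : E} :
    projectedGradient h f x = 0 ↔ gradient f x ∈ (LinearMap.ker (fderiv ℝ h x : E →ₗ[ℝ] F))ᗮ :=
  Submodule.starProjection_apply_eq_zero_iff _

theorem hasDerivAt_constraint_of_projectedGradientFlow {t : ℝ} (hh : DifferentiableAt ℝ h (γ t))
    (hγ : HasDerivAt γ (-projectedGradient h f (γ t)) t) :
    HasDerivAt (fun s => h (γ s)) 0 t := by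
  have hker := Submodule.starProjection_apply_mem
    (LinearMap.ker (fderiv ℝ h (γ t) : E →ₗ[ℝ] F)) (gradient f (γ t))
  have hzero : fderiv ℝ h (γ t) (projectedGradient h f (γ t)) = 0 := LinearMap.mem_ker.mp hker
  have hcomp := hh.hasFDerivAt.comp_hasDerivAt t hγ
  rwa [map_neg, hzero, neg_zero] at hcomp

theorem hasDerivAt_objective_of_projectedGradientFlow {t : ℝ} (hf : DifferentiableAt ℝ f (γ t))
    (hγ : HasDerivAt γ (-projectedGradient h f (γ t)) t) :
    HasDerivAt (fun s => f (γ s)) (-‖projectedGradient h f (γ t)‖ ^ 2) t := by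
  have hcomp := hf.hasFDerivAt.comp_hasDerivAt t hγ
  rwa [map_neg, ← inner_gradient_left, projectedGradient,
    Submodule.real_inner_self_starProjection] at hcomp

theorem constraint_eq_of_projectedGradientFlow (hh : Differentiable ℝ h)
    (hγ : ∀ t ≥ 0, HasDerivAt γ (-projectedGradient h f (γ t)) t) {t : ℝ} (ht : 0 ≤ t) :
    h (γ t) = h (γ 0) := by
  have hderiv s (hs : 0 ≤ s) := hasDerivAt_constraint_of_projectedGradientFlow (hh _) (hγ s hs)
  exact constant_of_has_deriv_right_zero
    (fun s hs => (hderiv s hs.1).continuousAt.continuousWithinAt)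
    (fun s hs => (hderiv s hs.1).hasDerivWithinAt) t ⟨ht, le_rfl⟩

end ProjectedGradientFlow

theorem stmt16_general (n m : ℕ) (U : Set (EuclideanSpace ℝ (Fin n))) (hU : IsOpen U)
    (f : EuclideanSpace ℝ (Fin n) → ℝ) (hf : ContDiffOn ℝ 1 f U)
    (h : EuclideanSpace ℝ (Fin n) → EuclideanSpace ℝ (Fin m)) (hh : ContDiff ℝ 1 h)
    (hsurj : ∀ y ∈ U, Function.Surjective (fderiv ℝ h y))
    (P : EuclideanSpace ℝ (Fin n) →
      EuclideanSpace ℝ (Fin n) →L[ℝ] EuclideanSpace ℝ (Fin n))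
    (hP1 : ∀ y, ∀ v ∈ LinearMap.ker
      (fderiv ℝ h y : EuclideanSpace ℝ (Fin n) →ₗ[ℝ] EuclideanSpace ℝ (Fin m)), P y v = v)
    (hP2 : ∀ y, ∀ v ∈ (LinearMap.ker
      (fderiv ℝ h y : EuclideanSpace ℝ (Fin n) →ₗ[ℝ] EuclideanSpace ℝ (Fin m)))ᗮ, P y v = 0)
    (φ : ℝ → EuclideanSpace ℝ (Fin n) → EuclideanSpace ℝ (Fin n))
    (hφ0 : ∀ x ∈ U, φ 0 x = x)
    (hφ : ∀ x ∈ U, ∀ t ≥ (0:ℝ), φ t x ∈ U ∧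
      HasDerivAt (fun s => φ s x) (-(P (φ t x)) (gradient f (φ t x))) t)
    (xstar : EuclideanSpace ℝ (Fin n))
    (hstrict : ∃ V, IsOpen V ∧ xstar ∈ V ∧ V ⊆ U ∧
      ∀ x ∈ V, h x = 0 → x ≠ xstar → f xstar < f x)
    (hiso : ∃ V₂, IsOpen V₂ ∧ xstar ∈ V₂ ∧ V₂ ⊆ U ∧
      ∀ x ∈ V₂, h x = 0 →
        gradient f x ∈ (LinearMap.ker
            (fderiv ℝ h x : EuclideanSpace ℝ (Fin n) →ₗ[ℝ] EuclideanSpace ℝ (Fin m)))ᗮ → x = xstar) :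
    ∃ V' : Set (EuclideanSpace ℝ (Fin n)), IsOpen V' ∧ xstar ∈ V' ∧
      ∀ x₀ ∈ V', h x₀ = 0 →
        Filter.Tendsto (fun t => φ t x₀) Filter.atTop (nhds xstar) := by
  obtain ⟨V, hVo, hxV, hVU, hVmin⟩ := hstrict
  obtain ⟨V₂, hV₂o, hxV₂, -, hV₂crit⟩ := hiso
  have hflow : ∀ x ∈ U, ∀ t ≥ (0 : ℝ),
      HasDerivAt (fun s => φ s x) (-projectedGradient h f (φ t x)) t := fun x hx t ht => by
    rw [projectedGradient, ← Submodule.eq_starProjection_of_eq_self_of_eq_zero _ (hP1 _) (hP2 _)]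
    exact (hφ x hx t ht).2
  obtain ⟨r, hr, hrV⟩ := nhds_basis_closedBall.mem_iff.mp
    (inter_mem (hVo.mem_nhds hxV) (hV₂o.mem_nhds hxV₂))
  have hrU : closedBall xstar r ⊆ U := fun z hz => hVU (hrV hz).1
  have hballU : ball xstar r ⊆ U := ball_subset_closedBall.trans hrU
  exact exists_isOpen_forall_tendsto_of_hasDerivAt (isClosed_singleton.preimage hh.continuous) hr
    ((continuousOn_projectedGradient hU hf hh.contDiffOn hsurj).mono hrU) (hf.continuousOn.mono hrU)
    (fun z hz => hVmin z (hrV (sphere_subset_closedBall hz.1)).1 hz.2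
      (ne_of_mem_sphere hz.1 hr.ne'))
    (fun y hy hy0 => hV₂crit y (hrV hy.1).2 hy.2 (projectedGradient_eq_zero_iff.mp hy0))
    (fun x₀ hx₀ => hφ0 x₀ (hballU hx₀))
    (fun x₀ ⟨hx₀r, (hx₀h : h x₀ = 0)⟩ t ht => by
      simpa [hφ0 x₀ (hballU hx₀r), hx₀h] using constraint_eq_of_projectedGradientFlow
        (hh.differentiable one_ne_zero) (hflow x₀ (hballU hx₀r)) ht)
    (fun x₀ hx₀ => hflow x₀ (hballU hx₀))
    (fun x₀ hx₀ t ht => hasDerivAt_objective_of_projectedGradientFlow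
      ((hf.differentiableOn one_ne_zero).differentiableAt (hU.mem_nhds (hφ x₀ (hballU hx₀) t ht).1))
      (hflow x₀ (hballU hx₀) t ht))

/-- for the flow of `ẋ = −P(x)∇f(x)` (projected gradient flow with
`P(y)` the orthogonal projection onto `ker Dh(y)`), a strict constrained local
minimum `x*` of `f` on `{h = 0}`, isolated in the set of constrained critical
points, is asymptotically stable: some neighbourhood `V'` of `x*` is such that
every solution starting in `V' ∩ {h = 0}` converges to `x*`. -/
theorem stmt16 (n m : ℕ) (U : Set (EuclideanSpace ℝ (Fin n))) (hU : IsOpen U)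
    (f : EuclideanSpace ℝ (Fin n) → ℝ) (hf : ContDiffOn ℝ 1 f U)
    (h : EuclideanSpace ℝ (Fin n) → EuclideanSpace ℝ (Fin m)) (hh : ContDiff ℝ 1 h)
    (hsurj : ∀ y ∈ U, Function.Surjective (fderiv ℝ h y))
    (P : EuclideanSpace ℝ (Fin n) →
      EuclideanSpace ℝ (Fin n) →L[ℝ] EuclideanSpace ℝ (Fin n))
    (hP1 : ∀ y, ∀ v ∈ LinearMap.ker
      (fderiv ℝ h y : EuclideanSpace ℝ (Fin n) →ₗ[ℝ] EuclideanSpace ℝ (Fin m)), P y v = v)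
    (hP2 : ∀ y, ∀ v ∈ (LinearMap.ker
      (fderiv ℝ h y : EuclideanSpace ℝ (Fin n) →ₗ[ℝ] EuclideanSpace ℝ (Fin m)))ᗮ, P y v = 0)
    (φ : ℝ → EuclideanSpace ℝ (Fin n) → EuclideanSpace ℝ (Fin n))
    (hφ0 : ∀ x ∈ U, φ 0 x = x)
    (hφ : ∀ x ∈ U, ∀ t ≥ (0:ℝ), φ t x ∈ U ∧
      HasDerivAt (fun s => φ s x) (-(P (φ t x)) (gradient f (φ t x))) t)
    (xstar : EuclideanSpace ℝ (Fin n)) (hxU : xstar ∈ U) (hfeas : h xstar = 0)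
    (hstrict : ∃ V, IsOpen V ∧ xstar ∈ V ∧ V ⊆ U ∧
      ∀ x ∈ V, h x = 0 → x ≠ xstar → f xstar < f x)
    (hiso : ∃ V₂, IsOpen V₂ ∧ xstar ∈ V₂ ∧ V₂ ⊆ U ∧
      ∀ x ∈ V₂, h x = 0 →
        gradient f x ∈ (LinearMap.ker
            (fderiv ℝ h x : EuclideanSpace ℝ (Fin n) →ₗ[ℝ] EuclideanSpace ℝ (Fin m)))ᗮ → x = xstar) :
    ∃ V' : Set (EuclideanSpace ℝ (Fin n)), IsOpen V' ∧ xstar ∈ V' ∧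
      ∀ x₀ ∈ V', h x₀ = 0 →
        Filter.Tendsto (fun t => φ t x₀) Filter.atTop (nhds xstar) :=
  stmt16_general n m U hU f hf h hh hsurj P hP1 hP2 φ hφ0 hφ xstar hstrict hiso
end

section
/- Let f be C¹ and coercive on ℝⁿ and let x : [0,∞) → ℝⁿ solve ẋ = −P(x)∇f(x) with P(x) the orthogonal projection onto ker J(x) (J a continuous full-row-rank matrix field), with h(x(0)) = 0 where J is the Jacobian of the C¹ map h. Then the trajectory x([0,∞)) is contained in the compact set {y : f(y) ≤ f(x(0)), h(y) = 0}; in particular the trajectory is bounded. -/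
open Filter Set

/-!
`P(y)` is forced to be the orthogonal projection onto `ker Dh(y)`, a positive operator with values
in `ker Dh(y)`. Along the flow, `(f ∘ x)' = -⟪∇f, P ∇f⟫ ≤ 0` and `(h ∘ x)' = -Dh (P ∇f) = 0`, so
the trajectory stays in `{f ≤ f (x 0)} ∩ {h = 0}`. That set is compact: it is closed, and by
coercivity the sublevel set of `f` lies in a compact set.
-/

theorem isCompact_setOf_le_of_tendsto_cocompact {X α : Type*} [TopologicalSpace X]
    [LinearOrder α] [TopologicalSpace α] [ClosedIicTopology α] [NoMaxOrder α] {f : X → α}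
    (hf : Continuous f) (hcoer : Tendsto f (cocompact X) atTop) (c : α) :
    IsCompact {y | f y ≤ c} := by
  obtain ⟨K, hK, hKsub⟩ := mem_cocompact.mp (hcoer.eventually (eventually_gt_atTop c))
  refine hK.of_isClosed_subset (isClosed_Iic.preimage hf) fun y hy => ?_
  by_contra hyK
  exact (hKsub hyK).not_ge hy

section Projection

variable {𝕜 E : Type*} [RCLike 𝕜] [NormedAddCommGroup E] [InnerProductSpace 𝕜 E]

theorem ContinuousLinearMap.eq_starProjection_of_eqOn {K : Submodule 𝕜 E}
    [K.HasOrthogonalProjection] {P : E →L[𝕜] E} (hK : ∀ v ∈ K, P v = v)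
    (hKperp : ∀ v ∈ Kᗮ, P v = 0) : P = K.starProjection :=
  LinearMap.ext_on_codisjoint K.isCompl_orthogonal.codisjoint
    (fun v hv => (hK v hv).trans (K.starProjection_eq_self_iff.mpr hv).symm)
    (fun v hv => (hKperp v hv).trans (K.starProjection_apply_eq_zero_iff.mpr hv).symm)

end Projection

section Trajectory

variable {E F : Type*} [NormedAddCommGroup E] [NormedSpace ℝ E]
  [NormedAddCommGroup F] [NormedSpace ℝ F] {x x' : ℝ → E}

theorem antitoneOn_comp_of_fderiv_nonpos {f : E → ℝ} (hf : Differentiable ℝ f)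
    (hx : ∀ t ≥ (0 : ℝ), HasDerivAt x (x' t) t)
    (hdesc : ∀ t ≥ (0 : ℝ), fderiv ℝ f (x t) (x' t) ≤ 0) :
    AntitoneOn (f ∘ x) (Ici 0) := by
  have hderiv : ∀ t ≥ (0 : ℝ), HasDerivAt (f ∘ x) (fderiv ℝ f (x t) (x' t)) t :=
    fun t ht => (hf (x t)).hasFDerivAt.comp_hasDerivAt t (hx t ht)
  refine antitoneOn_of_hasDerivWithinAt_nonpos (convex_Ici 0)
    (fun t ht => (hderiv t ht).continuousAt.continuousWithinAt) (fun t ht => ?_)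
    (fun t ht => hdesc t ?_)
  all_goals rw [interior_Ici] at ht
  exacts [(hderiv t ht.le).hasDerivWithinAt, ht.le]

theorem comp_eq_of_fderiv_eq_zero {g : E → F} (hg : Differentiable ℝ g)
    (hx : ∀ t ≥ (0 : ℝ), HasDerivAt x (x' t) t)
    (hflat : ∀ t ≥ (0 : ℝ), fderiv ℝ g (x t) (x' t) = 0) {t : ℝ} (ht : 0 ≤ t) :
    g (x t) = g (x 0) := by
  have hderiv : ∀ s ≥ (0 : ℝ), HasDerivAt (g ∘ x) 0 s := fun s hs =>
    hflat s hs ▸ (hg (x s)).hasFDerivAt.comp_hasDerivAt s (hx s hs)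
  exact constant_of_has_deriv_right_zero
    (fun s hs => (hderiv s hs.1).continuousAt.continuousWithinAt)
    (fun s hs => (hderiv s hs.1).hasDerivWithinAt) t (right_mem_Icc.mpr ht)

end Trajectory

theorem stmt19_general (n m : ℕ)
    (f : EuclideanSpace ℝ (Fin n) → ℝ) (hf : ContDiff ℝ 1 f)
    (hcoer : Filter.Tendsto f (Filter.cocompact (EuclideanSpace ℝ (Fin n))) Filter.atTop)
    (h : EuclideanSpace ℝ (Fin n) → EuclideanSpace ℝ (Fin m)) (hh : ContDiff ℝ 1 h)
    (P : EuclideanSpace ℝ (Fin n) →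
      EuclideanSpace ℝ (Fin n) →L[ℝ] EuclideanSpace ℝ (Fin n))
    (hP1 : ∀ y, ∀ v ∈ LinearMap.ker (fderiv ℝ h y : EuclideanSpace ℝ (Fin n) →ₗ[ℝ] EuclideanSpace ℝ (Fin m)), P y v = v)
    (hP2 : ∀ y, ∀ v ∈ (LinearMap.ker (fderiv ℝ h y : EuclideanSpace ℝ (Fin n) →ₗ[ℝ] EuclideanSpace ℝ (Fin m)))ᗮ, P y v = 0)
    (x : ℝ → EuclideanSpace ℝ (Fin n))
    (hx : ∀ t ≥ (0:ℝ), HasDerivAt x (-(P (x t)) (gradient f (x t))) t)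
    (hinit : h (x 0) = 0) :
    IsCompact {y | f y ≤ f (x 0) ∧ h y = 0} ∧
      ∀ t ≥ (0:ℝ), x t ∈ {y | f y ≤ f (x 0) ∧ h y = 0} := by
  have hproj y : P y = (LinearMap.ker (fderiv ℝ h y : EuclideanSpace ℝ (Fin n) →ₗ[ℝ]
      EuclideanSpace ℝ (Fin m))).starProjection :=
    ContinuousLinearMap.eq_starProjection_of_eqOn (hP1 y) (hP2 y)
  have hdesc : ∀ t ≥ (0 : ℝ), fderiv ℝ f (x t) (-(P (x t)) (gradient f (x t))) ≤ 0 := by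
    intro t _
    rw [← inner_gradient_left, inner_neg_right, neg_nonpos, hproj]
    exact ContinuousLinearMap.IsPositive.inner_nonneg_right
      (.of_isStarProjection isStarProjection_starProjection) _
  have hflat : ∀ t ≥ (0 : ℝ), fderiv ℝ h (x t) (-(P (x t)) (gradient f (x t))) = 0 := by
    intro t _
    rw [map_neg, hproj, neg_eq_zero]
    exact LinearMap.mem_ker.mp (Submodule.starProjection_apply_mem _ _)
  refine ⟨(isCompact_setOf_le_of_tendsto_cocompact hf.continuous hcoer _).inter_right
    (isClosed_eq hh.continuous continuous_const), fun t ht => ⟨?_, ?_⟩⟩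
  · exact antitoneOn_comp_of_fderiv_nonpos (hf.differentiable one_ne_zero) hx hdesc
      self_mem_Ici ht ht
  · exact (comp_eq_of_fderiv_eq_zero (hh.differentiable one_ne_zero) hx hflat ht).trans hinit

/-- for the projected gradient flow `ẋ = −P(x)∇f(x)` with `f` C¹
and coercive, `P(y)` the orthogonal projection onto `ker Dh(y)` for a C¹
full-row-rank `h`, and `h(x 0) = 0`, the trajectory stays in the compact
constrained sublevel set `{y | f y ≤ f (x 0) ∧ h y = 0}`; in particular it is
bounded. -/
theorem stmt19 (n m : ℕ)
    (f : EuclideanSpace ℝ (Fin n) → ℝ) (hf : ContDiff ℝ 1 f)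
    (hcoer : Filter.Tendsto f (Filter.cocompact (EuclideanSpace ℝ (Fin n))) Filter.atTop)
    (h : EuclideanSpace ℝ (Fin n) → EuclideanSpace ℝ (Fin m)) (hh : ContDiff ℝ 1 h)
    (hsurj : ∀ y, Function.Surjective (fderiv ℝ h y))
    (P : EuclideanSpace ℝ (Fin n) →
      EuclideanSpace ℝ (Fin n) →L[ℝ] EuclideanSpace ℝ (Fin n))
    (hP1 : ∀ y, ∀ v ∈ LinearMap.ker (fderiv ℝ h y : EuclideanSpace ℝ (Fin n) →ₗ[ℝ] EuclideanSpace ℝ (Fin m)), P y v = v)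
    (hP2 : ∀ y, ∀ v ∈ (LinearMap.ker (fderiv ℝ h y : EuclideanSpace ℝ (Fin n) →ₗ[ℝ] EuclideanSpace ℝ (Fin m)))ᗮ, P y v = 0)
    (x : ℝ → EuclideanSpace ℝ (Fin n))
    (hx : ∀ t ≥ (0:ℝ), HasDerivAt x (-(P (x t)) (gradient f (x t))) t)
    (hinit : h (x 0) = 0) :
    IsCompact {y | f y ≤ f (x 0) ∧ h y = 0} ∧
      ∀ t ≥ (0:ℝ), x t ∈ {y | f y ≤ f (x 0) ∧ h y = 0} :=
  stmt19_general n m f hf hcoer h hh P hP1 hP2 x hx hinit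
end
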